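/- Let α > 0 and β > 0 and let G be a random variable with the Beta(α,β) distribution. Let h(p) = −p log p − (1−p) log(1−p) be the binary entropy function (with h(0) = h(1) = 0). Then the expected entropy admits the closed form E[h(G)] = −(α/(α+β)) ψ(α+1) − (β/(α+β)) ψ(β+1) + ψ(α+β+1), where ψ denotes the digamma function, i.e. ψ(s) is the derivative at s of s ↦ log Γ(s). Equivalently, ∫₀¹ h(x) · x^{α−1}(1−x)^{β−1} dx / B(α,β) equals the stated expression. -/

import Mathlib

/-- The digamma function `ψ(s)`, the derivative at `s` of `s ↦ log Γ(s)`. -/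
noncomputable def digamma (s : ℝ) : ℝ := deriv (fun u : ℝ => Real.log (Real.Gamma u)) s

/-- The binary entropy function `h(p) = −p log p − (1−p) log (1−p)`
(with `h 0 = h 1 = 0`, automatic since `Real.log 0 = 0`). -/
noncomputable def binEntropy (p : ℝ) : ℝ := -(p * Real.log p) - (1 - p) * Real.log (1 - p)

/-!
Since `h(x) x^(a-1) (1-x)^(b-1) = -x^a (1-x)^(b-1) log x - x^(a-1) (1-x)^b log (1-x)`, the
expectation is a combination of the log-moments `∫₀¹ x^(a-1) (1-x)^(b-1) log x`. Differentiating
`B(a,b) = ∫₀¹ x^(a-1) (1-x)^(b-1) dx = Γ(a)Γ(b)/Γ(a+b)` in `a` under the integral sign shows that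
this log-moment is `B(a,b) (ψ(a) - ψ(a+b))`; the moment of `log (1-x)` follows by the reflection
`x ↦ 1 - x`. Finally `B(α+1,β) = α/(α+β) B(α,β)` and `B(α,β+1) = β/(α+β) B(α,β)`.
-/

open MeasureTheory Set Filter ProbabilityTheory

lemma rpow_add_mul_abs_log_le {x : ℝ} (hx0 : 0 < x) (hx1 : x ≤ 1) (s : ℝ) {t : ℝ} (ht : 0 < t) :
    x ^ (s + t) * |Real.log x| ≤ x ^ s / t := by
  have hlog := (Real.abs_log_mul_self_rpow_lt x t hx0 hx1 ht).le
  rw [abs_mul, abs_of_pos (Real.rpow_pos_of_pos hx0 t)] at hlog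
  calc x ^ (s + t) * |Real.log x| = x ^ s * (|Real.log x| * x ^ t) := by
        rw [Real.rpow_add hx0]; ring
    _ ≤ x ^ s * (1 / t) := by gcongr
    _ = x ^ s / t := by ring

lemma hasDerivAt_Gamma_mul_digamma {s : ℝ} (hs : 0 < s) :
    HasDerivAt Real.Gamma (Real.Gamma s * digamma s) s := by
  have hΓ := (Real.differentiableAt_Gamma fun m =>
    (show -(m : ℝ) < s by linarith [m.cast_nonneg (α := ℝ)]).ne').hasDerivAt
  have hpos := Real.Gamma_pos_of_pos hs
  rw [digamma, (hΓ.log hpos.ne').deriv, mul_div_cancel₀ _ hpos.ne']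
  exact hΓ

namespace ProbabilityTheory

variable {a b : ℝ}

lemma beta_comm (a b : ℝ) : beta a b = beta b a := by
  rw [beta, beta, mul_comm, add_comm]

lemma beta_add_one_left (ha : 0 < a) (hb : 0 < b) : beta (a + 1) b = a / (a + b) * beta a b := by
  have hΓ := (Real.Gamma_pos_of_pos (add_pos ha hb)).ne'
  rw [beta, beta, Real.Gamma_add_one ha.ne', add_right_comm, Real.Gamma_add_one (add_pos ha hb).ne']
  field_simp

lemma beta_add_one_right (ha : 0 < a) (hb : 0 < b) : beta a (b + 1) = b / (a + b) * beta a b := by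
  rw [beta_comm, beta_add_one_left hb ha, beta_comm, add_comm b]

lemma hasDerivAt_beta_left (ha : 0 < a) (hb : 0 < b) :
    HasDerivAt (fun a' => beta a' b) (beta a b * (digamma a - digamma (a + b))) a := by
  have hnum := (hasDerivAt_Gamma_mul_digamma ha).mul_const (Real.Gamma b)
  have hden := (hasDerivAt_Gamma_mul_digamma (add_pos ha hb)).comp_add_const a b
  have hΓ := (Real.Gamma_pos_of_pos (add_pos ha hb)).ne'
  refine (hnum.div hden hΓ).congr_deriv ?_
  rw [beta]
  field_simp

end ProbabilityTheory

section BetaIntegral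

variable {a b : ℝ}

lemma betaIntegrand_eq_ofReal (a b : ℝ) {x : ℝ} (hx : x ∈ Icc (0 : ℝ) 1) :
    (x : ℂ) ^ ((a : ℂ) - 1) * (1 - (x : ℂ)) ^ ((b : ℂ) - 1) =
      ((x ^ (a - 1) * (1 - x) ^ (b - 1) : ℝ) : ℂ) := by
  push_cast [Complex.ofReal_cpow hx.1, Complex.ofReal_cpow (sub_nonneg.2 hx.2)]
  rfl

lemma intervalIntegrable_rpow_mul_one_sub_rpow (ha : 0 < a) (hb : 0 < b) :
    IntervalIntegrable (fun x : ℝ => x ^ (a - 1) * (1 - x) ^ (b - 1)) volume 0 1 := by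
  have h := (Complex.betaIntegral_convergent (u := a) (v := b) (by simpa) (by simpa)).congr
    fun x hx => betaIntegrand_eq_ofReal a b (Ioc_subset_Icc_self (uIoc_of_le (zero_le_one' ℝ) ▸ hx))
  exact ⟨by simpa [IntegrableOn] using h.1.re, by simp⟩

lemma integral_rpow_mul_one_sub_rpow (ha : 0 < a) (hb : 0 < b) :
    ∫ x in (0 : ℝ)..1, x ^ (a - 1) * (1 - x) ^ (b - 1) = beta a b := by
  rw [beta_eq_betaIntegralReal a b ha hb, Complex.betaIntegral,
    intervalIntegral.integral_congr fun x hx =>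
      betaIntegrand_eq_ofReal a b (uIcc_of_le (zero_le_one' ℝ) ▸ hx),
    intervalIntegral.integral_ofReal, Complex.ofReal_re]

lemma intervalIntegrable_and_hasDerivAt_integral_rpow_mul_one_sub_rpow (ha : 0 < a) (hb : 0 < b) :
    IntervalIntegrable (fun x : ℝ => x ^ (a - 1) * Real.log x * (1 - x) ^ (b - 1)) volume 0 1 ∧
    HasDerivAt (fun a' => ∫ x in (0 : ℝ)..1, x ^ (a' - 1) * (1 - x) ^ (b - 1))
      (∫ x in (0 : ℝ)..1, x ^ (a - 1) * Real.log x * (1 - x) ^ (b - 1)) a := by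
  have ha4 : 0 < a / 4 := by positivity
  refine intervalIntegral.hasDerivAt_integral_of_dominated_loc_of_deriv_le
    (F := fun a' x => x ^ (a' - 1) * (1 - x) ^ (b - 1))
    (F' := fun a' x => x ^ (a' - 1) * Real.log x * (1 - x) ^ (b - 1))
    (bound := fun x => x ^ (a / 2 - 1) * (1 - x) ^ (b - 1) / (a / 4))
    (Metric.ball_mem_nhds a ha4) (Eventually.of_forall fun a' => by fun_prop)
    (intervalIntegrable_rpow_mul_one_sub_rpow ha hb) (by fun_prop) (ae_of_all _ ?_)
    ((intervalIntegrable_rpow_mul_one_sub_rpow (by positivity) hb).div_const _) (ae_of_all _ ?_)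
  · intro x hx a' ha'
    rw [uIoc_of_le zero_le_one] at hx
    have hexp : a / 2 - 1 + a / 4 ≤ a' - 1 := by
      linarith [(abs_lt.1 (Real.dist_eq a' a ▸ Metric.mem_ball.1 ha')).1]
    have h1x : 0 ≤ 1 - x := sub_nonneg.2 hx.2
    rw [Real.norm_eq_abs, abs_mul, abs_mul, abs_of_nonneg (Real.rpow_nonneg hx.1.le _),
      abs_of_nonneg (Real.rpow_nonneg h1x _)]
    calc x ^ (a' - 1) * |Real.log x| * (1 - x) ^ (b - 1)
        ≤ x ^ (a / 2 - 1 + a / 4) * |Real.log x| * (1 - x) ^ (b - 1) := by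
          gcongr ?_ * _ * _
          exact Real.rpow_le_rpow_of_exponent_ge hx.1 hx.2 hexp
      _ ≤ x ^ (a / 2 - 1) / (a / 4) * (1 - x) ^ (b - 1) := by
          gcongr
          exact rpow_add_mul_abs_log_le hx.1 hx.2 _ ha4
      _ = x ^ (a / 2 - 1) * (1 - x) ^ (b - 1) / (a / 4) := by ring
  · intro x hx a' _
    rw [uIoc_of_le zero_le_one] at hx
    have hpow := (Real.hasStrictDerivAt_const_rpow hx.1 (a' - 1)).hasDerivAt.comp a'
      ((hasDerivAt_id a').sub_const 1)
    simpa using hpow.mul_const ((1 - x) ^ (b - 1))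

lemma intervalIntegrable_rpow_mul_log_mul_one_sub_rpow (ha : 0 < a) (hb : 0 < b) :
    IntervalIntegrable (fun x : ℝ => x ^ (a - 1) * Real.log x * (1 - x) ^ (b - 1)) volume 0 1 :=
  (intervalIntegrable_and_hasDerivAt_integral_rpow_mul_one_sub_rpow ha hb).1

lemma integral_rpow_mul_log_mul_one_sub_rpow (ha : 0 < a) (hb : 0 < b) :
    ∫ x in (0 : ℝ)..1, x ^ (a - 1) * Real.log x * (1 - x) ^ (b - 1) =
      beta a b * (digamma a - digamma (a + b)) := by
  have hbeta : (fun a' => ∫ x in (0 : ℝ)..1, x ^ (a' - 1) * (1 - x) ^ (b - 1))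
      =ᶠ[nhds a] fun a' => beta a' b :=
    eventually_of_mem (Ioi_mem_nhds ha) fun a' ha' => integral_rpow_mul_one_sub_rpow ha' hb
  exact (intervalIntegrable_and_hasDerivAt_integral_rpow_mul_one_sub_rpow ha hb).2.unique
    ((hasDerivAt_beta_left ha hb).congr_of_eventuallyEq hbeta)

lemma rpow_mul_log_one_sub_mul_one_sub_rpow_eq (a b x : ℝ) :
    x ^ (a - 1) * Real.log (1 - x) * (1 - x) ^ (b - 1) =
      (1 - x) ^ (b - 1) * Real.log (1 - x) * (1 - (1 - x)) ^ (a - 1) := by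
  rw [sub_sub_cancel]; ring

lemma intervalIntegrable_rpow_mul_log_one_sub_mul_one_sub_rpow (ha : 0 < a) (hb : 0 < b) :
    IntervalIntegrable (fun x : ℝ => x ^ (a - 1) * Real.log (1 - x) * (1 - x) ^ (b - 1))
      volume 0 1 := by
  have h := (intervalIntegrable_rpow_mul_log_mul_one_sub_rpow hb ha).comp_sub_left 1
  rw [sub_zero, sub_self] at h
  simpa only [rpow_mul_log_one_sub_mul_one_sub_rpow_eq] using h.symm

lemma integral_rpow_mul_log_one_sub_mul_one_sub_rpow (ha : 0 < a) (hb : 0 < b) :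
    ∫ x in (0 : ℝ)..1, x ^ (a - 1) * Real.log (1 - x) * (1 - x) ^ (b - 1) =
      beta a b * (digamma b - digamma (a + b)) := by
  simp only [rpow_mul_log_one_sub_mul_one_sub_rpow_eq a b]
  rw [intervalIntegral.integral_comp_sub_left
      (fun y => y ^ (b - 1) * Real.log y * (1 - y) ^ (a - 1)) 1, sub_zero, sub_self,
    integral_rpow_mul_log_mul_one_sub_rpow hb ha, beta_comm, add_comm]

end BetaIntegral

lemma binEntropy_mul_rpow_mul_one_sub_rpow (a b x : ℝ) :
    binEntropy x * (x ^ (a - 1) * (1 - x) ^ (b - 1)) =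
      -(x ^ (a + 1 - 1) * Real.log x * (1 - x) ^ (b - 1) +
        x ^ (a - 1) * Real.log (1 - x) * (1 - x) ^ (b + 1 - 1)) := by
  rcases eq_or_ne x 0 with rfl | hx0
  · simp [binEntropy]
  rcases eq_or_ne x 1 with rfl | hx1
  · simp [binEntropy]
  rw [add_sub_right_comm, Real.rpow_add_one hx0, add_sub_right_comm,
    Real.rpow_add_one (sub_ne_zero.2 hx1.symm), binEntropy]
  ring

/-- **Expected binary entropy under a Beta distribution.**
For `α > 0`, `β > 0` and `G ∼ Beta(α,β)`,
`E[h(G)] = −(α/(α+β)) ψ(α+1) − (β/(α+β)) ψ(β+1) + ψ(α+β+1)`, i.e.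
`∫₀¹ h(x) x^(α−1)(1−x)^(β−1) dx / B(α,β)` equals the stated expression, where
`B(α,β) = Γ(α)Γ(β)/Γ(α+β)` and `ψ` is the digamma function. -/
theorem beta_expected_entropy (α β : ℝ) (hα : 0 < α) (hβ : 0 < β) :
    (∫ x in (0:ℝ)..1, binEntropy x * (x ^ (α - 1) * (1 - x) ^ (β - 1))) /
      (Real.Gamma α * Real.Gamma β / Real.Gamma (α + β)) =
      -(α / (α + β)) * digamma (α + 1) - (β / (α + β)) * digamma (β + 1) +
        digamma (α + β + 1) := by
  have hα1 : 0 < α + 1 := by linarith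
  have hβ1 : 0 < β + 1 := by linarith
  change _ / beta α β = _
  simp only [binEntropy_mul_rpow_mul_one_sub_rpow α β]
  rw [intervalIntegral.integral_neg, intervalIntegral.integral_add
      (intervalIntegrable_rpow_mul_log_mul_one_sub_rpow hα1 hβ)
      (intervalIntegrable_rpow_mul_log_one_sub_mul_one_sub_rpow hα hβ1),
    integral_rpow_mul_log_mul_one_sub_rpow hα1 hβ,
    integral_rpow_mul_log_one_sub_mul_one_sub_rpow hα hβ1, beta_add_one_left hα hβ,
    beta_add_one_right hα hβ, add_right_comm, ← add_assoc]
  have hB := (beta_pos hα hβ).ne'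
  have hαβ := (add_pos hα hβ).ne'
  field_simp
  ring
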